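/- arXiv:2104.05001 — 6 statements merged into one kernel-verified Lean document; each statement's English description precedes it below -/
import Mathlib

section
/- For every z, w in the open unit disc of ℂ with z ≠ w, the point H(z,w) = ((1−zw)/(z−w), i(1+zw)/(z−w), −i(z+w)/(z−w)) belongs to the domain D^{(2)}_{1,∞}; that is, writing H(z,w) = (h₁,h₂,h₃), one has h₁² + h₂² − h₃² = 1, |h₁|² + |h₂|² − |h₃|² > 1, and Im(h₂·(conj(h₁) + conj(h₃))) > 0. -/
/-!
Each coordinate of `H(z,w)` is a polynomial in `z, w` divided by `z - w`, so all three
conditions reduce to identities between the numerators. The quadratic form of the numerators is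
`(z - w)²`; by the parallelogram law, their Hermitian form is
`‖z - w‖² + 2 (1 - ‖z‖²)(1 - ‖w‖²)`. For the last condition, `conj h₁ + conj h₃` has numerator
`conj ((1 - i z)(1 - i w))`, and twice the resulting imaginary part is
`(1 - ‖w‖²) ‖1 - i z‖² + (1 - ‖z‖²) ‖1 - i w‖²`, which is positive on the bidisc.
-/

/-- The map `H(z,w) = ((1−zw)/(z−w), i(1+zw)/(z−w), −i(z+w)/(z−w))`. -/
noncomputable def Hmap (z w : ℂ) : ℂ × ℂ × ℂ :=
  ((1 - z * w) / (z - w), Complex.I * (1 + z * w) / (z - w),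
    -Complex.I * (z + w) / (z - w))

open Complex ComplexConjugate

lemma norm_one_sub_mul_sq_add_norm_one_add_mul_sq_sub_norm_add_sq (z w : ℂ) :
    ‖1 - z * w‖ ^ 2 + ‖1 + z * w‖ ^ 2 - ‖z + w‖ ^ 2
      = ‖z - w‖ ^ 2 + 2 * (1 - ‖z‖ ^ 2) * (1 - ‖w‖ ^ 2) := by
  have h₁ := parallelogram_law_with_norm ℝ (1 : ℂ) (z * w)
  have h₂ := parallelogram_law_with_norm ℝ z w
  rw [norm_mul, norm_one] at h₁
  linear_combination h₁ - h₂

lemma two_mul_re_mul_conj_one_sub_I_mul_mul (z w : ℂ) :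
    2 * ((1 + z * w) * conj ((1 - I * z) * (1 - I * w))).re
      = (1 - ‖w‖ ^ 2) * ‖1 - I * z‖ ^ 2 + (1 - ‖z‖ ^ 2) * ‖1 - I * w‖ ^ 2 := by
  simp only [Complex.sq_norm, normSq_apply, mul_re, mul_im, add_re, add_im, sub_re, sub_im,
    one_re, one_im, I_re, I_im, conj_re, conj_im]
  ring

lemma one_sub_I_mul_ne_zero {z : ℂ} (hz : ‖z‖ < 1) : 1 - I * z ≠ 0 := by
  intro h
  have h1 : ‖I * z‖ = 1 := by rw [← sub_eq_zero.mp h, norm_one]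
  rw [norm_mul, norm_I, one_mul] at h1
  exact hz.ne h1

section

variable {z w : ℂ}

lemma Hmap_sq_add_sq_sub_sq (hzw : z ≠ w) :
    (Hmap z w).1 ^ 2 + (Hmap z w).2.1 ^ 2 - (Hmap z w).2.2 ^ 2 = 1 := by
  have hd : z - w ≠ 0 := sub_ne_zero.mpr hzw
  simp only [Hmap, div_pow, ← add_div, ← sub_div]
  rw [div_eq_one_iff_eq (pow_ne_zero 2 hd)]
  linear_combination ((1 + z * w) ^ 2 - (z + w) ^ 2) * I_sq

lemma Hmap_norm_sq_add_norm_sq_sub_norm_sq (hzw : z ≠ w) :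
    ‖(Hmap z w).1‖ ^ 2 + ‖(Hmap z w).2.1‖ ^ 2 - ‖(Hmap z w).2.2‖ ^ 2
      = 1 + 2 * (1 - ‖z‖ ^ 2) * (1 - ‖w‖ ^ 2) / ‖z - w‖ ^ 2 := by
  have hd : ‖z - w‖ ^ 2 ≠ 0 := by simpa [sub_eq_zero] using hzw
  simp only [Hmap, norm_div, norm_mul, norm_neg, norm_I, one_mul, div_pow, ← add_div,
    ← sub_div, norm_one_sub_mul_sq_add_norm_one_add_mul_sq_sub_norm_add_sq]
  rw [add_div, div_self hd, mul_div_assoc]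

end

lemma Hmap_im_mul_conj_add_conj (z w : ℂ) :
    ((Hmap z w).2.1 * (conj (Hmap z w).1 + conj (Hmap z w).2.2)).im
      = ((1 - ‖w‖ ^ 2) * ‖1 - I * z‖ ^ 2 + (1 - ‖z‖ ^ 2) * ‖1 - I * w‖ ^ 2)
          / (2 * ‖z - w‖ ^ 2) := by
  have hprod : (Hmap z w).2.1 * (conj (Hmap z w).1 + conj (Hmap z w).2.2)
      = I * ((1 + z * w) * conj ((1 - I * z) * (1 - I * w))) / (normSq (z - w) : ℂ) := by
    simp only [Hmap, map_div₀]
    rw [← add_div, div_mul_div_comm, mul_conj]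
    congr 1
    simp only [map_mul, map_sub, map_neg, map_add, map_one, conj_I]
    linear_combination (-I * conj z * conj w * (z * w + 1)) * I_sq
  rw [hprod, div_ofReal_im, I_mul_im, ← Complex.sq_norm,
    ← two_mul_re_mul_conj_one_sub_I_mul_mul]
  field_simp

/-- For `z ≠ w` in the unit disc, `H(z,w)` lies in `D^{(2)}_{1,∞}`. -/
theorem Hmap_mem_D2_one_infty (z w : ℂ)
    (hz : ‖z‖ < 1) (hw : ‖w‖ < 1) (hzw : z ≠ w) :
    (Hmap z w).1 ^ 2 + (Hmap z w).2.1 ^ 2 - (Hmap z w).2.2 ^ 2 = 1 ∧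
    1 < ‖(Hmap z w).1‖ ^ 2 + ‖(Hmap z w).2.1‖ ^ 2 -
        ‖(Hmap z w).2.2‖ ^ 2 ∧
    0 < ((Hmap z w).2.1 *
        ((starRingEnd ℂ) (Hmap z w).1 + (starRingEnd ℂ) (Hmap z w).2.2)).im := by
  have hz' : 0 < 1 - ‖z‖ ^ 2 := by nlinarith [norm_nonneg z]
  have hw' : 0 < 1 - ‖w‖ ^ 2 := by nlinarith [norm_nonneg w]
  have hd : 0 < ‖z - w‖ := norm_pos_iff.mpr (sub_ne_zero.mpr hzw)
  have hIz : 0 < ‖1 - I * z‖ := norm_pos_iff.mpr (one_sub_I_mul_ne_zero hz)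
  refine ⟨Hmap_sq_add_sq_sub_sq hzw, ?_, ?_⟩
  · rw [Hmap_norm_sq_add_norm_sq_sub_norm_sq hzw]
    exact lt_add_of_pos_right 1 (by positivity)
  · rw [Hmap_im_mul_conj_add_conj z w]
    positivity
end

section
/- The map H is a bijection from D²∖Δ onto D^{(2)}_{1,∞}; that is, H is injective on D²∖Δ and H(D²∖Δ) = D^{(2)}_{1,∞}. -/
/-- The bidisc minus its diagonal, `D² ∖ Δ`. -/
def biDiscOffDiag : Set (ℂ × ℂ) :=
  {p | ‖p.1‖ < 1 ∧ ‖p.2‖ < 1 ∧ p.1 ≠ p.2}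

/-- The domain `D^{(2)}_{1,∞}`. -/
def D2OneInfty : Set (ℂ × ℂ × ℂ) :=
  {q | 1 < ‖q.1‖ ^ 2 + ‖q.2.1‖ ^ 2 - ‖q.2.2‖ ^ 2 ∧
       q.1 ^ 2 + q.2.1 ^ 2 - q.2.2 ^ 2 = 1 ∧
       0 < (q.2.1 * ((starRingEnd ℂ) q.1 + (starRingEnd ℂ) q.2.2)).im}

open Complex ComplexConjugate

lemma Hmap_fst_sub_I_mul_fst_snd (z w : ℂ) :
    (Hmap z w).1 - I * (Hmap z w).2.1 = 2 / (z - w) := by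
  simp only [Hmap, mul_div_assoc', div_sub_div_same]
  congr 1
  linear_combination (-1 - z * w) * I_sq

lemma Hmap_quadric_eq_one (z w : ℂ) (h : z ≠ w) :
    (Hmap z w).1 ^ 2 + (Hmap z w).2.1 ^ 2 - (Hmap z w).2.2 ^ 2 = 1 := by
  have := sub_ne_zero.2 h
  simp only [Hmap]
  field_simp
  linear_combination (1 + z ^ 2 * w ^ 2 - z ^ 2 - w ^ 2) * I_sq

lemma Hmap_hermitian_form_eq (z w : ℂ) (h : z ≠ w) :
    ‖(Hmap z w).1‖ ^ 2 + ‖(Hmap z w).2.1‖ ^ 2 - ‖(Hmap z w).2.2‖ ^ 2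
      = 1 + 2 * (1 - ‖z‖ ^ 2) * (1 - ‖w‖ ^ 2) / ‖z - w‖ ^ 2 := by
  have : ‖z - w‖ ≠ 0 := norm_ne_zero_iff.2 (sub_ne_zero.2 h)
  simp only [Hmap, norm_div, norm_mul, norm_neg, norm_I, one_mul, div_pow]
  field_simp
  simp only [Complex.sq_norm, normSq_apply, mul_re, mul_im, sub_re, sub_im, add_re, add_im,
    one_re, one_im]
  ring

lemma Hmap_im_snd_mul_conj_eq (z w : ℂ) (h : z ≠ w) :
    ((Hmap z w).2.1 * (conj (Hmap z w).1 + conj (Hmap z w).2.2)).im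
      = (1 - ‖z‖ ^ 2 * ‖w‖ ^ 2 + (1 - ‖w‖ ^ 2) * z.im + (1 - ‖z‖ ^ 2) * w.im) / ‖z - w‖ ^ 2 := by
  have h0 : z - w ≠ 0 := sub_ne_zero.2 h
  have hc : conj (z - w) ≠ 0 := (map_ne_zero _).2 h0
  have key : (Hmap z w).2.1 * (conj (Hmap z w).1 + conj (Hmap z w).2.2)
      = I * (1 + z * w) * conj (1 - z * w - I * (z + w)) / ((normSq (z - w) : ℝ) : ℂ) := by
    rw [← mul_conj]
    simp only [Hmap, map_div₀, map_mul, map_add, map_sub, map_one, map_neg, conj_I] at hc ⊢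
    field_simp
    ring
  rw [key, div_ofReal_im, ← Complex.sq_norm]
  congr 1
  simp only [Complex.sq_norm, normSq_apply, mul_re, mul_im, sub_re, sub_im, add_re, add_im,
    one_re, one_im, conj_re, conj_im, I_re, I_im]
  ring

lemma lt_one_and_lt_one_iff {r s x y : ℝ} (hr : 0 ≤ r) (hs : 0 ≤ s) (hx : -r ≤ x) (hy : -s ≤ y) :
    r < 1 ∧ s < 1 ↔ 0 < (1 - r ^ 2) * (1 - s ^ 2) ∧
      0 < 1 - r ^ 2 * s ^ 2 + (1 - s ^ 2) * x + (1 - r ^ 2) * y := by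
  constructor
  · rintro ⟨hr1, hs1⟩
    have hr2 : 0 < 1 - r ^ 2 := by nlinarith
    have hs2 : 0 < 1 - s ^ 2 := by nlinarith
    refine ⟨mul_pos hr2 hs2, ?_⟩
    nlinarith [mul_pos (mul_pos (sub_pos.2 hr1) (sub_pos.2 hs1)) (by nlinarith : 0 < 1 - r * s),
      mul_le_mul_of_nonneg_left hx hs2.le, mul_le_mul_of_nonneg_left hy hr2.le]
  · rintro ⟨hprod, hT⟩
    rcases mul_pos_iff.1 hprod with ⟨hr2, hs2⟩ | ⟨hr2, hs2⟩
    · constructor <;> nlinarith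
    · have hr1 : 1 < r := by nlinarith
      have hs1 : 1 < s := by nlinarith
      nlinarith [mul_pos (mul_pos (sub_pos.2 hr1) (sub_pos.2 hs1)) (by nlinarith : 0 < r * s - 1),
        mul_le_mul_of_nonpos_left hx hs2.le, mul_le_mul_of_nonpos_left hy hr2.le]

lemma Hmap_mem_D2OneInfty_iff {z w : ℂ} (h : z ≠ w) :
    Hmap z w ∈ D2OneInfty ↔ ‖z‖ < 1 ∧ ‖w‖ < 1 := by
  have hd : 0 < ‖z - w‖ ^ 2 := by have := sub_ne_zero.2 h; positivity
  rw [lt_one_and_lt_one_iff (norm_nonneg z) (norm_nonneg w) (neg_le_of_abs_le (abs_im_le_norm z))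
    (neg_le_of_abs_le (abs_im_le_norm w))]
  simp only [D2OneInfty, Set.mem_ofPred_eq, Hmap_hermitian_form_eq z w h,
    Hmap_im_snd_mul_conj_eq z w h, Hmap_quadric_eq_one z w h, true_and, lt_add_iff_pos_right,
    div_pos_iff_of_pos_right hd, mul_assoc, mul_pos_iff_of_pos_left (two_pos : (0 : ℝ) < 2)]

noncomputable def HmapInv (q : ℂ × ℂ × ℂ) : ℂ × ℂ :=
  ((1 + I * q.2.2) / (q.1 - I * q.2.1), (I * q.2.2 - 1) / (q.1 - I * q.2.1))

lemma HmapInv_fst_sub_snd (q : ℂ × ℂ × ℂ) :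
    (HmapInv q).1 - (HmapInv q).2 = 2 / (q.1 - I * q.2.1) := by
  rw [HmapInv, div_sub_div_same]
  congr 1
  ring

lemma HmapInv_Hmap {z w : ℂ} (h : z ≠ w) : HmapInv (Hmap z w) = (z, w) := by
  have := sub_ne_zero.2 h
  rw [HmapInv, Hmap_fst_sub_I_mul_fst_snd]
  simp only [Hmap, Prod.mk.injEq]
  constructor <;> field_simp <;> linear_combination (-z - w) * I_sq

lemma Hmap_HmapInv {q : ℂ × ℂ × ℂ} (hq : q.1 ^ 2 + q.2.1 ^ 2 - q.2.2 ^ 2 = 1)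
    (ht : q.1 - I * q.2.1 ≠ 0) : Hmap (HmapInv q).1 (HmapInv q).2 = q := by
  obtain ⟨q₁, q₂, q₃⟩ := q
  simp only [Hmap, HmapInv_fst_sub_snd]
  simp only [HmapInv, Prod.mk.injEq] at ht hq ⊢
  refine ⟨?_, ?_, ?_⟩ <;> field_simp
  · linear_combination (-1) * hq + (q₂ ^ 2 - q₃ ^ 2) * I_sq
  · linear_combination I * hq + (-2 * q₁ * q₂ + I * q₂ ^ 2 + I * q₃ ^ 2) * I_sq
  · linear_combination (-2 * q₃) * I_sq

lemma fst_sub_I_mul_snd_ne_zero_of_mem_D2OneInfty {q : ℂ × ℂ × ℂ} (hq : q ∈ D2OneInfty) :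
    q.1 - I * q.2.1 ≠ 0 := by
  obtain ⟨q₁, q₂, q₃⟩ := q
  obtain ⟨h₁, h₂, h₃⟩ := hq
  intro h
  obtain rfl : q₁ = I * q₂ := sub_eq_zero.1 h
  -- Then `|q₃| = 1`, so the first inequality gives `|q₂| > 1` and the third `|q₂|² < |q₂|`.
  have hq₃ : ‖q₃‖ = 1 := by
    have : q₃ ^ 2 = -1 := by linear_combination -h₂ + q₂ ^ 2 * I_sq
    refine (pow_eq_one_iff_of_nonneg (norm_nonneg _) two_ne_zero).1 ?_
    rw [← norm_pow, this, norm_neg, norm_one]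
  have him : (q₂ * (conj (I * q₂) + conj q₃)).im = -‖q₂‖ ^ 2 + (q₂ * conj q₃).im := by
    simp only [Complex.sq_norm, normSq_apply, mul_im, mul_re, add_re, add_im, conj_re, conj_im,
      I_re, I_im]
    ring
  have hle : (q₂ * conj q₃).im ≤ ‖q₂‖ := by
    simpa [hq₃] using im_le_norm (q₂ * conj q₃)
  simp only [norm_mul, norm_I, one_mul, hq₃] at h₁
  nlinarith

/-- `H` is a bijection from `D² ∖ Δ` onto `D^{(2)}_{1,∞}`. -/
theorem Hmap_bijection :
    Set.InjOn (fun p : ℂ × ℂ => Hmap p.1 p.2) biDiscOffDiag ∧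
    (fun p : ℂ × ℂ => Hmap p.1 p.2) '' biDiscOffDiag = D2OneInfty := by
  have hinv : Set.InvOn HmapInv (fun p : ℂ × ℂ => Hmap p.1 p.2) biDiscOffDiag D2OneInfty :=
    ⟨fun p hp => HmapInv_Hmap hp.2.2,
      fun q hq => Hmap_HmapInv hq.2.1 (fst_sub_I_mul_snd_ne_zero_of_mem_D2OneInfty hq)⟩
  have hmaps : Set.MapsTo (fun p : ℂ × ℂ => Hmap p.1 p.2) biDiscOffDiag D2OneInfty :=
    fun p hp => (Hmap_mem_D2OneInfty_iff hp.2.2).2 ⟨hp.1, hp.2.1⟩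
  have hmaps_inv : Set.MapsTo HmapInv D2OneInfty biDiscOffDiag := by
    intro q hq
    have ht := fst_sub_I_mul_snd_ne_zero_of_mem_D2OneInfty hq
    have hne : (HmapInv q).1 ≠ (HmapInv q).2 := by
      rw [Ne, ← sub_eq_zero, HmapInv_fst_sub_snd]
      exact div_ne_zero two_ne_zero ht
    have hnorm := (Hmap_mem_D2OneInfty_iff hne).1 (by rwa [Hmap_HmapInv hq.2.1 ht])
    exact ⟨hnorm.1, hnorm.2, hne⟩
  have hbij := hinv.bijOn hmaps hmaps_inv
  exact ⟨hbij.injOn, hbij.image_eq⟩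
end

section
/- For all real numbers s, t with 1 ≤ s < t, the preimage under H of the domain D^{(2)}_{s,t} is H⁻¹(D^{(2)}_{s,t}) = {(z₁,z₂) ∈ D² : √(2/(t+1)) < ρ(z₁,z₂) < √(2/(s+1))}. -/
/-- The pseudohyperbolic distance `ρ(z,w) = |(z−w)/(1−conj(z)·w)|`. -/
noncomputable def rho (z w : ℂ) : ℝ :=
  ‖(z - w) / (1 - (starRingEnd ℂ) z * w)‖

/-- The domain `D^{(2)}_{s,t}`. -/
def D2st (s t : ℝ) : Set (ℂ × ℂ × ℂ) :=
  {q | s < ‖q.1‖ ^ 2 + ‖q.2.1‖ ^ 2 - ‖q.2.2‖ ^ 2 ∧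
       ‖q.1‖ ^ 2 + ‖q.2.1‖ ^ 2 - ‖q.2.2‖ ^ 2 < t ∧
       q.1 ^ 2 + q.2.1 ^ 2 - q.2.2 ^ 2 = 1 ∧
       0 < (q.2.1 * ((starRingEnd ℂ) q.1 + (starRingEnd ℂ) q.2.2)).im}

/-!
With `d = |z − w|²` and `P = (1 − |z|²)(1 − |w|²)`, the form `Q = |H₁|² + |H₂|² − |H₃|²` takes
the value `1 + 2P/d` at `H(z,w)`, while `|1 − z̄w|² = d + P` gives `ρ(z,w)² = d/(d + P)`.
Hence `ρ = √(2/(Q + 1))`, and `x ↦ √(2/(x + 1))` is strictly decreasing on `(−1, ∞)`, so the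
bounds `s < Q < t` become the stated bounds on `ρ`. The other two conditions defining
`D^{(2)}_{s,t}` hold on all of `D² ∖ Δ`: the quadric equation is an identity, and
`|z − w|² · Im(H₂(H̄₁ + H̄₃)) ≥ (1 − |z|)(1 − |w|)(1 − |z||w|) > 0`.
-/

open Complex ComplexConjugate

noncomputable def lorentzNormSq (q : ℂ × ℂ × ℂ) : ℝ :=
  ‖q.1‖ ^ 2 + ‖q.2.1‖ ^ 2 - ‖q.2.2‖ ^ 2

lemma normSq_one_sub_conj_mul (z w : ℂ) :
    normSq (1 - conj z * w) = normSq (z - w) + (1 - normSq z) * (1 - normSq w) := by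
  simp only [normSq_apply, mul_re, mul_im, sub_re, sub_im, one_re, one_im, conj_re, conj_im]
  ring

lemma rho_sq (z w : ℂ) :
    rho z w ^ 2 = normSq (z - w) / (normSq (z - w) + (1 - normSq z) * (1 - normSq w)) := by
  rw [rho, Complex.sq_norm, map_div₀, normSq_one_sub_conj_mul]

lemma lorentzNormSq_Hmap {z w : ℂ} (hzw : z ≠ w) :
    lorentzNormSq (Hmap z w) = 1 + 2 * ((1 - normSq z) * (1 - normSq w)) / normSq (z - w) := by
  have hd : normSq (z - w) ≠ 0 := (normSq_pos.2 (sub_ne_zero.2 hzw)).ne'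
  have key : normSq (1 - z * w) + normSq (1 + z * w) - normSq (z + w)
      = normSq (z - w) + 2 * ((1 - normSq z) * (1 - normSq w)) := by
    simp only [normSq_apply, mul_re, mul_im, add_re, add_im, sub_re, sub_im, one_re, one_im]
    ring
  simp only [lorentzNormSq, Hmap, norm_div, div_pow, Complex.sq_norm, normSq_mul, normSq_neg,
    normSq_I, one_mul]
  field_simp
  linarith

lemma rho_sq_eq_two_div {z w : ℂ} (hzw : z ≠ w) :
    rho z w ^ 2 = 2 / (lorentzNormSq (Hmap z w) + 1) := by
  have hd : normSq (z - w) ≠ 0 := (normSq_pos.2 (sub_ne_zero.2 hzw)).ne'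
  have hsum : lorentzNormSq (Hmap z w) + 1
      = 2 * (normSq (z - w) + (1 - normSq z) * (1 - normSq w)) / normSq (z - w) := by
    rw [lorentzNormSq_Hmap hzw]
    field_simp
    ring
  rw [rho_sq, hsum, div_div_eq_mul_div, mul_div_mul_left _ _ two_ne_zero]

lemma rho_eq_sqrt {z w : ℂ} (hzw : z ≠ w) :
    rho z w = Real.sqrt (2 / (lorentzNormSq (Hmap z w) + 1)) := by
  rw [← rho_sq_eq_two_div hzw]
  exact (Real.sqrt_sq (norm_nonneg _)).symm

lemma one_lt_lorentzNormSq_Hmap {z w : ℂ} (hz : ‖z‖ < 1) (hw : ‖w‖ < 1) (hzw : z ≠ w) :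
    1 < lorentzNormSq (Hmap z w) := by
  have hz' : 0 < 1 - normSq z := by rw [← Complex.sq_norm]; nlinarith [norm_nonneg z]
  have hw' : 0 < 1 - normSq w := by rw [← Complex.sq_norm]; nlinarith [norm_nonneg w]
  rw [lorentzNormSq_Hmap hzw, lt_add_iff_pos_right]
  have := normSq_pos.2 (sub_ne_zero.2 hzw)
  positivity

lemma Hmap_quadric {z w : ℂ} (hzw : z ≠ w) :
    (Hmap z w).1 ^ 2 + (Hmap z w).2.1 ^ 2 - (Hmap z w).2.2 ^ 2 = 1 := by
  have hd : (z - w) ^ 2 ≠ 0 := pow_ne_zero 2 (sub_ne_zero.2 hzw)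
  simp only [Hmap, div_pow]
  rw [← add_div, ← sub_div, div_eq_one_iff_eq hd]
  linear_combination ((1 + z * w) ^ 2 - (z + w) ^ 2) * I_sq

lemma im_Hmap_pos {z w : ℂ} (hz : ‖z‖ < 1) (hw : ‖w‖ < 1) (hzw : z ≠ w) :
    0 < ((Hmap z w).2.1 * (conj (Hmap z w).1 + conj (Hmap z w).2.2)).im := by
  have hd : z - w ≠ 0 := sub_ne_zero.2 hzw
  set G := I * (1 + z * w) * (conj (1 - z * w) + I * conj (z + w))
  have hE : (Hmap z w).2.1 * (conj (Hmap z w).1 + conj (Hmap z w).2.2)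
      = G / (normSq (z - w) : ℂ) := by
    rw [← mul_conj (z - w)]
    simp only [Hmap, G, map_div₀, map_sub, map_add, map_mul, map_one, map_neg, conj_I]
    field_simp
  have hG : G.im = 1 - ‖z‖ ^ 2 * ‖w‖ ^ 2 + (1 - ‖w‖ ^ 2) * z.im + (1 - ‖z‖ ^ 2) * w.im := by
    simp only [G, Complex.sq_norm, normSq_apply, mul_re, mul_im, add_re, add_im, sub_re, sub_im,
      one_re, one_im, conj_re, conj_im, I_re, I_im]
    ring
  rw [hE, div_ofReal_im]
  refine div_pos ?_ (normSq_pos.2 hd)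
  have hz0 := norm_nonneg z
  have hw0 := norm_nonneg w
  have hzw1 : ‖z‖ * ‖w‖ < 1 := by nlinarith
  calc 0 < (1 - ‖z‖) * (1 - ‖w‖) * (1 - ‖z‖ * ‖w‖) := by
        have := sub_pos.2 hz; have := sub_pos.2 hw; have := sub_pos.2 hzw1; positivity
    _ = 1 - ‖z‖ ^ 2 * ‖w‖ ^ 2 + (1 - ‖w‖ ^ 2) * -‖z‖ + (1 - ‖z‖ ^ 2) * -‖w‖ := by ring
    _ ≤ G.im := by
        rw [hG]
        gcongr
        · nlinarith
        · exact (abs_le.1 (abs_im_le_norm z)).1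
        · nlinarith
        · exact (abs_le.1 (abs_im_le_norm w)).1

lemma sqrt_two_div_add_one_lt_iff {a b : ℝ} (ha : -1 < a) (hb : -1 < b) :
    Real.sqrt (2 / (a + 1)) < Real.sqrt (2 / (b + 1)) ↔ b < a := by
  rw [Real.sqrt_lt_sqrt_iff (div_pos two_pos (by linarith)).le,
    div_lt_div_iff_of_pos_left two_pos (by linarith) (by linarith), add_lt_add_iff_right]

lemma Hmap_mem_D2st_iff {z w : ℂ} (hz : ‖z‖ < 1) (hw : ‖w‖ < 1) (hzw : z ≠ w) (s t : ℝ) :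
    Hmap z w ∈ D2st s t ↔ s < lorentzNormSq (Hmap z w) ∧ lorentzNormSq (Hmap z w) < t :=
  ⟨fun h => ⟨h.1, h.2.1⟩, fun h => ⟨h.1, h.2, Hmap_quadric hzw, im_Hmap_pos hz hw hzw⟩⟩

lemma rho_bounds_iff_Hmap_mem_D2st {z w : ℂ} (hz : ‖z‖ < 1) (hw : ‖w‖ < 1) (hzw : z ≠ w)
    {s t : ℝ} (hs : -1 < s) (ht : -1 < t) :
    Real.sqrt (2 / (t + 1)) < rho z w ∧ rho z w < Real.sqrt (2 / (s + 1)) ↔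
      Hmap z w ∈ D2st s t := by
  have hQ : -1 < lorentzNormSq (Hmap z w) := by
    linarith [one_lt_lorentzNormSq_Hmap hz hw hzw]
  rw [Hmap_mem_D2st_iff hz hw hzw, rho_eq_sqrt hzw,
    sqrt_two_div_add_one_lt_iff ht hQ,
    sqrt_two_div_add_one_lt_iff hQ hs, and_comm]

/-- For `1 ≤ s < t`, the preimage under `H` (defined on `D² ∖ Δ`) of the domain
`D^{(2)}_{s,t}` equals `{(z₁,z₂) ∈ D² : √(2/(t+1)) < ρ(z₁,z₂) < √(2/(s+1))}`. -/
theorem Hmap_preimage_D2st (s t : ℝ) (hs : 1 ≤ s) (hst : s < t) :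
    {p : ℂ × ℂ | ‖p.1‖ < 1 ∧ ‖p.2‖ < 1 ∧ p.1 ≠ p.2 ∧
        Hmap p.1 p.2 ∈ D2st s t} =
    {p : ℂ × ℂ | ‖p.1‖ < 1 ∧ ‖p.2‖ < 1 ∧
        Real.sqrt (2 / (t + 1)) < rho p.1 p.2 ∧
        rho p.1 p.2 < Real.sqrt (2 / (s + 1))} := by
  have hs' : -1 < s := by linarith
  have ht' : -1 < t := by linarith
  ext ⟨z, w⟩
  simp only [Set.mem_ofPred_eq]
  constructor
  · rintro ⟨hz, hw, hzw, hH⟩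
    exact ⟨hz, hw, (rho_bounds_iff_Hmap_mem_D2st hz hw hzw hs' ht').2 hH⟩
  · rintro ⟨hz, hw, hlo, hhi⟩
    have hzw : z ≠ w := by
      rintro rfl
      have hρ : rho z z = 0 := by simp [rho]
      exact (Real.sqrt_nonneg _).not_gt (hρ ▸ hlo)
    exact ⟨hz, hw, hzw, (rho_bounds_iff_Hmap_mem_D2st hz hw hzw hs' ht').1 ⟨hlo, hhi⟩⟩
end

section
/- For every holomorphic automorphism φ of the open unit disc D (i.e., every holomorphic bijection of D whose inverse is holomorphic), there exists a real 3×3 matrix A with Aᵗ·I_{2,1}·A = I_{2,1} and det A = 1 (i.e., A ∈ SO(2,1)) such that for all z, w ∈ D with z ≠ w, H(φ(z), φ(w)) = A · H(z,w), where A acts on ℂ³ as a linear map. -/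
/-!
Composing `φ` with a disc automorphism sending `φ 0` to `0` gives a holomorphic self-map `g` of
the disc fixing `0` with a holomorphic left inverse, so Schwarz's lemma applied to `g` and to its
inverse gives `|g z| = |z|`, and `g` is a rotation. Hence `φ z = (a z + b) / (b̄ z + ā)` with
`|a|² - |b|² = 1`.

In homogeneous coordinates `z = p / q`, `H(z, w)` is `(p q' - p' q)⁻¹` times a vector `N` that
is bilinear in `(p, q)` and `(p', q')`. Substituting `(p, q) = (a z + b, b̄ z + ā)` multiplies
`p q' - p' q` by `|a|² - |b|² = 1` and transforms `N` by the image of `[[a, b], [b̄, ā]]` under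
the double cover `SU(1,1) → SO⁺(2,1)`.
-/

/-- `H(z,w)` as a vector in `ℂ³ = Fin 3 → ℂ`. -/
noncomputable def Hvec (z w : ℂ) : Fin 3 → ℂ :=
  ![(1 - z * w) / (z - w), Complex.I * (1 + z * w) / (z - w),
    -Complex.I * (z + w) / (z - w)]

/-- The matrix `I_{2,1} = diag(1,1,−1)`. -/
def I21 : Matrix (Fin 3) (Fin 3) ℝ := Matrix.diagonal ![1, 1, -1]

open ComplexConjugate Metric Set Complex

noncomputable def discMobius (a b z : ℂ) : ℂ := (a * z + b) / (conj b * z + conj a)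

section discMobius

variable {a b z : ℂ}

lemma norm_lt_norm_of_normSq_sub_eq_one (hab : normSq a - normSq b = 1) : ‖b‖ < ‖a‖ := by
  rw [← sq_lt_sq₀ (norm_nonneg b) (norm_nonneg a), ← normSq_eq_norm_sq, ← normSq_eq_norm_sq]
  linarith

lemma discMobius_denom_ne_zero (hab : normSq a - normSq b = 1) (hz : ‖z‖ < 1) :
    conj b * z + conj a ≠ 0 := by
  intro h
  have : ‖a‖ = ‖b‖ * ‖z‖ := by
    simpa [norm_mul] using congrArg norm (eq_neg_of_add_eq_zero_right h)
  nlinarith [norm_lt_norm_of_normSq_sub_eq_one hab, norm_nonneg b, norm_nonneg z]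

lemma normSq_denom_sub_normSq_num :
    normSq (conj b * z + conj a) - normSq (a * z + b) =
      (normSq a - normSq b) * (1 - normSq z) := by
  simp only [normSq_apply, add_re, add_im, mul_re, mul_im, conj_re, conj_im]
  ring

lemma norm_discMobius_lt_one (hab : normSq a - normSq b = 1) (hz : ‖z‖ < 1) :
    ‖discMobius a b z‖ < 1 := by
  have hden := discMobius_denom_ne_zero hab hz
  have hz' : normSq z < 1 := by rw [normSq_eq_norm_sq]; nlinarith [norm_nonneg z]
  have hlt : normSq (a * z + b) < normSq (conj b * z + conj a) := by
    nlinarith [normSq_denom_sub_normSq_num (a := a) (b := b) (z := z)]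
  rw [discMobius, norm_div, div_lt_one (norm_pos_iff.mpr hden), norm_def, norm_def]
  exact Real.sqrt_lt_sqrt (normSq_nonneg _) hlt

lemma mapsTo_discMobius (hab : normSq a - normSq b = 1) :
    MapsTo (discMobius a b) (ball 0 1) (ball 0 1) := fun z hz => by
  rw [mem_ball_zero_iff] at hz ⊢
  exact norm_discMobius_lt_one hab hz

lemma differentiableOn_discMobius (hab : normSq a - normSq b = 1) :
    DifferentiableOn ℂ (discMobius a b) (ball 0 1) :=
  DifferentiableOn.div (by fun_prop) (by fun_prop) fun _ hz =>
    discMobius_denom_ne_zero hab (mem_ball_zero_iff.mp hz)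

lemma discMobius_conj_neg_discMobius (hab : normSq a - normSq b = 1) (hz : ‖z‖ < 1) :
    discMobius (conj a) (-b) (discMobius a b z) = z := by
  have hden := discMobius_denom_ne_zero hab hz
  have hab' : a * conj a - b * conj b = 1 := by
    rw [mul_conj, mul_conj]; exact_mod_cast hab
  have hnum : conj a * (a * z + b) + -b * (conj b * z + conj a) = z := by
    linear_combination z * hab'
  have hden' : -conj b * (a * z + b) + a * (conj b * z + conj a) = 1 := by
    linear_combination hab'
  simp only [discMobius, map_neg, conj_conj]
  rw [← mul_div_mul_right _ _ hden, add_mul, add_mul, mul_assoc, mul_assoc,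
    div_mul_cancel₀ _ hden, hnum, hden', div_one]

lemma discMobius_sq_mul {μ : ℂ} (hμ : ‖μ‖ = 1) (z : ℂ) :
    discMobius a b (μ ^ 2 * z) = discMobius (a * μ) (b * conj μ) z := by
  have hμ0 : μ ≠ 0 := norm_ne_zero_iff.mp (by rw [hμ]; exact one_ne_zero)
  have hμμ : μ * conj μ = 1 := by rw [mul_conj, normSq_eq_norm_sq, hμ]; norm_num
  simp only [discMobius, map_mul, conj_conj]
  rw [← mul_div_mul_left (a * μ * z + b * conj μ) _ hμ0]
  congr 1
  · linear_combination -b * hμμ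
  · linear_combination -conj a * hμμ

lemma normSq_mul_sub_normSq_mul {μ : ℂ} (hμ : ‖μ‖ = 1) :
    normSq (a * μ) - normSq (b * conj μ) = normSq a - normSq b := by
  rw [normSq_mul, normSq_mul, normSq_conj, normSq_eq_norm_sq μ, hμ]; ring

lemma exists_discMobius_zero_eq {c : ℂ} (hc : ‖c‖ < 1) :
    ∃ a b, normSq a - normSq b = 1 ∧ discMobius a b 0 = c := by
  have hc' : normSq c < 1 := by rw [normSq_eq_norm_sq]; nlinarith [norm_nonneg c]
  set L := √(1 - normSq c)
  have hL : 0 < L := Real.sqrt_pos.mpr (by linarith)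
  have hL2 : L ^ 2 = 1 - normSq c := Real.sq_sqrt (by linarith)
  refine ⟨(L⁻¹ : ℝ), c * (L⁻¹ : ℝ), ?_, ?_⟩
  · rw [normSq_mul, normSq_ofReal]
    field_simp
    linarith
  · simp only [discMobius, mul_zero, zero_add, conj_ofReal]
    field_simp [ofReal_ne_zero.mpr hL.ne']

end discMobius

lemma exists_norm_eq_one_eqOn_mul_of_leftInvOn {g h : ℂ → ℂ}
    (hgd : DifferentiableOn ℂ g (ball 0 1)) (hgm : MapsTo g (ball 0 1) (ball 0 1))
    (hg0 : g 0 = 0) (hhd : DifferentiableOn ℂ h (ball 0 1))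
    (hhm : MapsTo h (ball 0 1) (ball 0 1)) (hhg : LeftInvOn h g (ball 0 1)) :
    ∃ C : ℂ, ‖C‖ = 1 ∧ EqOn g (fun z => C * z) (ball 0 1) := by
  have hh0 : h 0 = 0 := by simpa [hg0] using hhg (mem_ball_self one_pos)
  have hnorm : ∀ z ∈ ball (0 : ℂ) 1, ‖g z‖ = ‖z‖ := fun z hz => by
    have hz' := mem_ball_zero_iff.mp hz
    refine le_antisymm (norm_le_norm_of_mapsTo_ball hgd
      (hgm.mono_right ball_subset_closedBall) hg0 hz') ?_
    simpa [hhg hz] using norm_le_norm_of_mapsTo_ball hhd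
      (hhm.mono_right ball_subset_closedBall) hh0 (mem_ball_zero_iff.mp (hgm hz))
  have hhalf : (2⁻¹ : ℂ) ∈ ball (0 : ℂ) 1 := by rw [mem_ball_zero_iff]; norm_num
  obtain ⟨C, hC, hgC⟩ := affine_of_mapsTo_ball_of_exists_norm_dslope_eq_div' hgd
    (by rw [hg0]; exact hgm.mono_right ball_subset_closedBall)
    ⟨2⁻¹, hhalf, by
      rw [dslope_of_ne _ (by norm_num), slope_def_field, hg0, sub_zero, sub_zero, norm_div,
        hnorm _ hhalf, div_self (by norm_num)]; norm_num⟩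
  refine ⟨C, by simpa using hC, fun z hz => ?_⟩
  simpa [hg0, mul_comm] using hgC hz

theorem exists_discMobius_of_leftInvOn {φ ψ : ℂ → ℂ}
    (hφd : DifferentiableOn ℂ φ (ball 0 1)) (hφm : MapsTo φ (ball 0 1) (ball 0 1))
    (hψd : DifferentiableOn ℂ ψ (ball 0 1)) (hψm : MapsTo ψ (ball 0 1) (ball 0 1))
    (hψφ : LeftInvOn ψ φ (ball 0 1)) :
    ∃ a b : ℂ, normSq a - normSq b = 1 ∧ EqOn φ (discMobius a b) (ball 0 1) := by
  obtain ⟨a₀, b₀, hab₀, hc⟩ :=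
    exists_discMobius_zero_eq (mem_ball_zero_iff.mp (hφm (mem_ball_self one_pos)))
  have hab₀' : normSq (conj a₀) - normSq (-b₀) = 1 := by rwa [normSq_conj, normSq_neg]
  have hinv : ∀ z ∈ ball (0 : ℂ) 1,
      discMobius a₀ b₀ (discMobius (conj a₀) (-b₀) z) = z := fun z hz => by
    simpa using discMobius_conj_neg_discMobius hab₀' (mem_ball_zero_iff.mp hz)
  obtain ⟨C, hC, hgC⟩ := exists_norm_eq_one_eqOn_mul_of_leftInvOn
    ((differentiableOn_discMobius hab₀').comp hφd hφm) ((mapsTo_discMobius hab₀').comp hφm)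
    (by simp [← hc, discMobius_conj_neg_discMobius hab₀])
    (hψd.comp (differentiableOn_discMobius hab₀) (mapsTo_discMobius hab₀))
    (hψm.comp (mapsTo_discMobius hab₀))
    (fun z hz => by simp [hinv _ (hφm hz), hψφ hz])
  -- the rotation by `μ ^ 2` is absorbed as `(a₀, b₀) ↦ (a₀ μ, b₀ μ̄)`
  obtain ⟨μ, hμ⟩ := IsAlgClosed.exists_pow_nat_eq C two_pos
  have hμ1 : ‖μ‖ = 1 := by
    rwa [← pow_left_inj₀ (norm_nonneg μ) zero_le_one two_ne_zero, one_pow, ← norm_pow, hμ]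
  refine ⟨a₀ * μ, b₀ * conj μ, by rwa [normSq_mul_sub_normSq_mul hμ1], fun z hz => ?_⟩
  rw [← discMobius_sq_mul hμ1, hμ, ← hinv _ (hφm hz)]
  exact congrArg _ (hgC hz)

/-- The image of `[[a, b], [conj b, conj a]] ∈ SU(1,1)` under the double cover
`SU(1,1) → SO⁺(2,1)`. -/
noncomputable def so21OfSU11 (a b : ℂ) : Matrix (Fin 3) (Fin 3) ℝ :=
  !![(a ^ 2).re - (b ^ 2).re, -((a ^ 2).im + (b ^ 2).im), 2 * (a * b).im;
     (a ^ 2).im - (b ^ 2).im, (a ^ 2).re + (b ^ 2).re, -(2 * (a * b).re);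
     -(2 * (a * conj b).im), -(2 * (a * conj b).re), normSq a + normSq b]

def hvecNum (p q p' q' : ℂ) : Fin 3 → ℂ :=
  ![q * q' - p * p', I * (q * q' + p * p'), -I * (p * q' + p' * q)]

lemma Hvec_div_div {p q p' q' : ℂ} (hq : q ≠ 0) (hq' : q' ≠ 0) :
    Hvec (p / q) (p' / q') = (p * q' - p' * q)⁻¹ • hvecNum p q p' q' := by
  have hsub : p / q - p' / q' = (p * q' - p' * q) / (q * q') := by
    rw [div_sub_div _ _ hq hq']; ring
  ext i
  fin_cases i <;>
    simp only [Hvec, hvecNum, hsub, Fin.zero_eta, Fin.mk_one, Fin.reduceFinMk, Pi.smul_apply,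
      Matrix.cons_val, smul_eq_mul] <;>
    field_simp

lemma Hvec_eq_smul_hvecNum (z w : ℂ) : Hvec z w = (z - w)⁻¹ • hvecNum z 1 w 1 := by
  simpa using Hvec_div_div (p := z) (p' := w) one_ne_zero one_ne_zero

lemma hvecNum_discMobius (a b z w : ℂ) :
    hvecNum (a * z + b) (conj b * z + conj a) (a * w + b) (conj b * w + conj a) =
      ((so21OfSU11 a b).map ((↑) : ℝ → ℂ)).mulVec (hvecNum z 1 w 1) := by
  ext i
  -- writing `re` and `im` through `conj` turns this into a polynomial identity modulo `I ^ 2 = -1`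
  fin_cases i <;>
    simp only [hvecNum, so21OfSU11, Matrix.mulVec, dotProduct, Fin.sum_univ_three,
      Matrix.map_apply, Matrix.of_apply, Matrix.cons_val, Fin.zero_eta, Fin.mk_one,
      Fin.reduceFinMk, ofReal_add, ofReal_sub, ofReal_mul, ofReal_neg, ofReal_ofNat, re_eq_add_conj,
      im_eq_sub_conj, ← mul_conj, map_pow, map_mul, conj_conj] <;>
    field_simp <;>
    ring_nf <;>
    simp only [I_sq] <;>
    ring

lemma Hvec_discMobius {a b z w : ℂ} (hab : normSq a - normSq b = 1) (hz : ‖z‖ < 1)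
    (hw : ‖w‖ < 1) :
    Hvec (discMobius a b z) (discMobius a b w) =
      ((so21OfSU11 a b).map ((↑) : ℝ → ℂ)).mulVec (Hvec z w) := by
  have hab' : a * conj a - b * conj b = 1 := by
    rw [mul_conj, mul_conj]; exact_mod_cast hab
  rw [discMobius, discMobius, Hvec_div_div (discMobius_denom_ne_zero hab hz)
    (discMobius_denom_ne_zero hab hw), hvecNum_discMobius, Hvec_eq_smul_hvecNum,
    Matrix.mulVec_smul]
  congr 2
  linear_combination (z - w) * hab'

lemma so21OfSU11_transpose_mul_I21_mul {a b : ℂ} (hab : normSq a - normSq b = 1) :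
    (so21OfSU11 a b).transpose * I21 * so21OfSU11 a b = I21 := by
  obtain ⟨x, y⟩ := a
  obtain ⟨u, v⟩ := b
  simp only [normSq_mk] at hab
  ext i j
  fin_cases i <;> fin_cases j <;>
    simp only [so21OfSU11, I21, Matrix.mul_apply, Matrix.transpose_apply, Matrix.of_apply,
      Matrix.diagonal_apply, Fin.sum_univ_three, Matrix.cons_val', Matrix.cons_val_zero,
      Matrix.cons_val_one, Matrix.cons_val, Matrix.cons_val_fin_one, Fin.isValue, Fin.reduceEq,
      Fin.zero_eta, Fin.mk_one, Fin.reduceFinMk, ↓reduceIte, normSq_mk, pow_two, mul_re, mul_im,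
      conj_re, conj_im] <;>
    first
      | ring1
      | linear_combination (x * x + y * y - (u * u + v * v) + 1) * hab
      | linear_combination -(x * x + y * y - (u * u + v * v) + 1) * hab

lemma det_so21OfSU11 {a b : ℂ} (hab : normSq a - normSq b = 1) :
    (so21OfSU11 a b).det = 1 := by
  obtain ⟨x, y⟩ := a
  obtain ⟨u, v⟩ := b
  simp only [normSq_mk] at hab
  simp only [Matrix.det_fin_three, so21OfSU11, Matrix.of_apply, Matrix.cons_val',
    Matrix.cons_val_zero, Matrix.cons_val_one, Matrix.cons_val, Matrix.cons_val_fin_one, normSq_mk,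
    pow_two, mul_re, mul_im, conj_re, conj_im]
  linear_combination
    ((x * x + y * y - (u * u + v * v)) ^ 2 + (x * x + y * y - (u * u + v * v)) + 1) * hab

theorem exists_SO21_of_discAut_general (φ ψ : ℂ → ℂ)
    (hφd : DifferentiableOn ℂ φ (Metric.ball (0 : ℂ) 1))
    (hφm : Set.MapsTo φ (Metric.ball (0 : ℂ) 1) (Metric.ball (0 : ℂ) 1))
    (hψd : DifferentiableOn ℂ ψ (Metric.ball (0 : ℂ) 1))
    (hψm : Set.MapsTo ψ (Metric.ball (0 : ℂ) 1) (Metric.ball (0 : ℂ) 1))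
    (hlr : ∀ z ∈ Metric.ball (0 : ℂ) 1, ψ (φ z) = z) :
    ∃ A : Matrix (Fin 3) (Fin 3) ℝ,
      A.transpose * I21 * A = I21 ∧ A.det = 1 ∧
      ∀ z w : ℂ, z ∈ Metric.ball (0 : ℂ) 1 → w ∈ Metric.ball (0 : ℂ) 1 → z ≠ w →
        Hvec (φ z) (φ w) = (A.map (fun x => (x : ℂ))).mulVec (Hvec z w) := by
  obtain ⟨a, b, hab, hφ⟩ := exists_discMobius_of_leftInvOn hφd hφm hψd hψm hlr
  refine ⟨so21OfSU11 a b, so21OfSU11_transpose_mul_I21_mul hab, det_so21OfSU11 hab,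
    fun z w hz hw _ => ?_⟩
  rw [hφ hz, hφ hw]
  exact Hvec_discMobius hab (mem_ball_zero_iff.mp hz) (mem_ball_zero_iff.mp hw)

/-- For every holomorphic automorphism `φ` of the unit disc there is a matrix
`A ∈ SO(2,1)` such that `H(φ(z), φ(w)) = A · H(z,w)` for all `z ≠ w` in the disc. -/
theorem exists_SO21_of_discAut (φ ψ : ℂ → ℂ)
    (hφd : DifferentiableOn ℂ φ (Metric.ball (0 : ℂ) 1))
    (hφm : Set.MapsTo φ (Metric.ball (0 : ℂ) 1) (Metric.ball (0 : ℂ) 1))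
    (hψd : DifferentiableOn ℂ ψ (Metric.ball (0 : ℂ) 1))
    (hψm : Set.MapsTo ψ (Metric.ball (0 : ℂ) 1) (Metric.ball (0 : ℂ) 1))
    (hlr : ∀ z ∈ Metric.ball (0 : ℂ) 1, ψ (φ z) = z)
    (hrl : ∀ z ∈ Metric.ball (0 : ℂ) 1, φ (ψ z) = z) :
    ∃ A : Matrix (Fin 3) (Fin 3) ℝ,
      A.transpose * I21 * A = I21 ∧ A.det = 1 ∧
      ∀ z w : ℂ, z ∈ Metric.ball (0 : ℂ) 1 → w ∈ Metric.ball (0 : ℂ) 1 → z ≠ w →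
        Hvec (φ z) (φ w) = (A.map (fun x => (x : ℂ))).mulVec (Hvec z w) :=
  exists_SO21_of_discAut_general φ ψ hφd hφm hψd hψm hlr
end

section
/- For every point (u,v) in the open unit ball B₂ of ℂ², there exist complex numbers α, β with |α|² − |β|² = 1 and a real number t ∈ [0,1) such that conj(β)·v + conj(α) ≠ 0 and (u/(conj(β)·v + conj(α)), (α·v + β)/(conj(β)·v + conj(α))) = (t, 0); that is, every SU(1,1)-orbit of B₂ (for the embedded action) contains a point of the form (t,0) with t ∈ [0,1). -/
/-!
Take `β = -α v`, so that `α v + β = 0` and the denominator becomes `conj α · (1 - |v|²)`.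
With `s = √(1 - |v|²)` and `u = |u| w`, `|w| = 1`, the choice `α = conj w / s` makes the
denominator `w s`, so the first coordinate is `|u| / s`, which lies in `[0, 1)` because
`|u|² < 1 - |v|²`; moreover `|α|² - |β|² = |α|² (1 - |v|²) = 1`.
-/

open ComplexConjugate

theorem Complex.conj_neg_mul_mul_add_conj (α v : ℂ) :
    conj (-α * v) * v + conj α = conj α * (1 - (‖v‖ : ℂ) ^ 2) := by
  rw [map_mul, map_neg, ← Complex.conj_mul' v]
  ring

theorem Complex.norm_sq_sub_norm_neg_mul_sq (α v : ℂ) :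
    ‖α‖ ^ 2 - ‖-α * v‖ ^ 2 = ‖α‖ ^ 2 * (1 - ‖v‖ ^ 2) := by
  rw [norm_mul, norm_neg]
  ring

theorem Complex.conj_div_neg_mul_mul_add_conj_div (w v : ℂ) {s : ℝ} (hs : (s : ℂ) ≠ 0)
    (hs2 : s ^ 2 = 1 - ‖v‖ ^ 2) :
    conj (-(conj w / s) * v) * v + conj (conj w / s) = w * s := by
  rw [Complex.conj_neg_mul_mul_add_conj, map_div₀, Complex.conj_conj, Complex.conj_ofReal,
    ← Complex.ofReal_pow, ← Complex.ofReal_one, ← Complex.ofReal_sub, ← hs2]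
  push_cast
  field_simp

/-- Every point of the unit ball `B₂` can be moved to a point `(t,0)`,
`t ∈ [0,1)`, by an element of the embedded `SU(1,1)`. -/
theorem SU11_orbit_reaches_axis (u v : ℂ)
    (huv : ‖u‖ ^ 2 + ‖v‖ ^ 2 < 1) :
    ∃ (α β : ℂ) (t : ℝ), ‖α‖ ^ 2 - ‖β‖ ^ 2 = 1 ∧
      t ∈ Set.Ico (0 : ℝ) 1 ∧
      (starRingEnd ℂ) β * v + (starRingEnd ℂ) α ≠ 0 ∧
      (u / ((starRingEnd ℂ) β * v + (starRingEnd ℂ) α),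
        (α * v + β) / ((starRingEnd ℂ) β * v + (starRingEnd ℂ) α)) =
        ((t : ℂ), (0 : ℂ)) := by
  have hv : 0 < 1 - ‖v‖ ^ 2 := by nlinarith [norm_nonneg u]
  set s := √(1 - ‖v‖ ^ 2)
  have hs : 0 < s := Real.sqrt_pos.2 hv
  have hs2 : s ^ 2 = 1 - ‖v‖ ^ 2 := Real.sq_sqrt hv.le
  have hsC : (s : ℂ) ≠ 0 := by exact_mod_cast hs.ne'
  set w := Complex.exp (u.arg * Complex.I)
  have hw : ‖w‖ = 1 := Complex.norm_exp_ofReal_mul_I _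
  have hw0 : w ≠ 0 := Complex.exp_ne_zero _
  have hu : (‖u‖ : ℂ) * w = u := Complex.norm_mul_exp_arg_mul_I u
  have hden := Complex.conj_div_neg_mul_mul_add_conj_div w v hsC hs2
  refine ⟨conj w / s, -(conj w / s) * v, ‖u‖ / s, ?_, ⟨by positivity, ?_⟩, ?_, ?_⟩
  · rw [Complex.norm_sq_sub_norm_neg_mul_sq, ← hs2, norm_div, Complex.norm_conj, hw,
      Complex.norm_real, Real.norm_of_nonneg hs.le]
    field_simp
  · rw [div_lt_one hs]
    exact (Real.lt_sqrt (norm_nonneg u)).2 (by linarith)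
  · rw [hden]
    exact mul_ne_zero hw0 hsC
  · rw [hden, Prod.mk.injEq]
    refine ⟨?_, by ring_nf⟩
    conv_lhs => rw [← hu]
    push_cast
    field_simp
end

section
/- For every t ∈ (0,1), the orbit of the point (t,0) ∈ B₂ under the embedded SU(1,1)-action equals the set {(u,v) ∈ B₂ : |u|² + t²·|v|² = t²}; that is, {T_{α,β}(t,0) : α, β ∈ ℂ, |α|² − |β|² = 1} = {(u,v) ∈ B₂ : |u|² + t²·|v|² = t²}. -/
/-!
Since the second coordinate of the base point is `0`, `T_{α,β}(u,0) = (u c, β c)` with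
`c = (conj α)⁻¹`, and `|α|² - |β|² = 1` says exactly that `|c|² + |β c|² = 1`. So the orbit of
`(u,0)` is `{(u c, v) : c ≠ 0, |c|² + |v|² = 1}`, which for `u ≠ 0` is the ellipsoid
`|p₁|² + |u|²|p₂|² = |u|²` with the points `p₁ = 0` removed. For `0 < t < 1` those are exactly
the points of the ellipsoid on the sphere `∂B₂`.
-/

/-- The orbit of `(u,v)` under the embedded `SU(1,1)`-action
`T_{α,β}(u,v) = (u/(conj β·v + conj α), (α·v + β)/(conj β·v + conj α))`. -/
noncomputable def SU11orbit (u v : ℂ) : Set (ℂ × ℂ) :=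
  {p | ∃ α β : ℂ, ‖α‖ ^ 2 - ‖β‖ ^ 2 = 1 ∧
    p = (u / ((starRingEnd ℂ) β * v + (starRingEnd ℂ) α),
      (α * v + β) / ((starRingEnd ℂ) β * v + (starRingEnd ℂ) α))}

open ComplexConjugate

theorem mem_SU11orbit_zero_iff (u : ℂ) (p : ℂ × ℂ) :
    p ∈ SU11orbit u 0 ↔ ∃ c : ℂ, c ≠ 0 ∧ ‖c‖ ^ 2 + ‖p.2‖ ^ 2 = 1 ∧ p.1 = u * c := by
  constructor
  · rintro ⟨α, β, h, rfl⟩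
    have hα : α ≠ 0 := by
      rintro rfl
      nlinarith [norm_nonneg β, norm_zero (E := ℂ)]
    refine ⟨(conj α)⁻¹, by simpa using hα, ?_, by simp [div_eq_mul_inv]⟩
    simp only [mul_zero, zero_add, norm_inv, norm_div, Complex.norm_conj]
    field_simp
    linarith
  · obtain ⟨p₁, p₂⟩ := p
    rintro ⟨c, hc, hnorm, rfl⟩
    refine ⟨conj c⁻¹, p₂ * c⁻¹, ?_, ?_⟩
    · simp only [norm_mul, norm_inv, Complex.norm_conj] at hnorm ⊢
      field_simp
      linarith
    · simp [hc]

theorem mem_SU11orbit_zero_iff_of_ne_zero {u : ℂ} (hu : u ≠ 0) (p : ℂ × ℂ) :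
    p ∈ SU11orbit u 0 ↔ p.1 ≠ 0 ∧ ‖p.1‖ ^ 2 + ‖u‖ ^ 2 * ‖p.2‖ ^ 2 = ‖u‖ ^ 2 := by
  rw [mem_SU11orbit_zero_iff]
  constructor
  · rintro ⟨c, hc, hnorm, hp⟩
    refine ⟨hp ▸ mul_ne_zero hu hc, ?_⟩
    calc ‖p.1‖ ^ 2 + ‖u‖ ^ 2 * ‖p.2‖ ^ 2 = ‖u‖ ^ 2 * (‖c‖ ^ 2 + ‖p.2‖ ^ 2) := by
          rw [hp, norm_mul]; ring
      _ = ‖u‖ ^ 2 := by rw [hnorm, mul_one]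
  · rintro ⟨hp, hnorm⟩
    have hu' : ‖u‖ ≠ 0 := norm_ne_zero_iff.mpr hu
    refine ⟨p.1 / u, div_ne_zero hp hu, ?_, (mul_div_cancel₀ p.1 hu).symm⟩
    rw [norm_div]
    field_simp
    linarith

theorem norm_sq_add_norm_sq_lt_one_iff {t : ℝ} (ht : t ∈ Set.Ioo (0 : ℝ) 1) {u v : ℂ}
    (h : ‖u‖ ^ 2 + t ^ 2 * ‖v‖ ^ 2 = t ^ 2) : ‖u‖ ^ 2 + ‖v‖ ^ 2 < 1 ↔ u ≠ 0 := by
  obtain ⟨ht0, ht1⟩ := ht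
  have hv : ‖v‖ ^ 2 = 1 - ‖u‖ ^ 2 / t ^ 2 := by field_simp; linarith
  have hsum : ‖u‖ ^ 2 + ‖v‖ ^ 2 = 1 - ‖u‖ ^ 2 * (1 / t ^ 2 - 1) := by rw [hv]; ring
  have hk : 0 < 1 / t ^ 2 - 1 := by
    rw [sub_pos, one_lt_div (by positivity)]; nlinarith
  rw [hsum, sub_lt_self_iff, mul_pos_iff_of_pos_right hk, sq_pos_iff, norm_ne_zero_iff]

/-- For `t ∈ (0,1)`, the `SU(1,1)`-orbit of `(t,0)` in `B₂` is the ellipsoidal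
hypersurface `{(u,v) ∈ B₂ : |u|² + t²|v|² = t²}`. -/
theorem SU11_orbit_t (t : ℝ) (ht : t ∈ Set.Ioo (0 : ℝ) 1) :
    SU11orbit (t : ℂ) 0 =
      {p : ℂ × ℂ | ‖p.1‖ ^ 2 + ‖p.2‖ ^ 2 < 1 ∧
        ‖p.1‖ ^ 2 + t ^ 2 * ‖p.2‖ ^ 2 = t ^ 2} := by
  have hnorm : ‖(t : ℂ)‖ ^ 2 = t ^ 2 := by rw [Complex.norm_real, Real.norm_eq_abs, sq_abs]
  ext p
  rw [mem_SU11orbit_zero_iff_of_ne_zero (Complex.ofReal_ne_zero.mpr ht.1.ne'), hnorm]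
  exact and_congr_left fun h => (norm_sq_add_norm_sq_lt_one_iff ht h).symm
end
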